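/- Let M = ∑_{n≥0} m(n)·zⁿ ∈ ℚ⟦z⟧ be the ordinary generating function of peakless Motzkin paths. Then for every integer k ≥ 0, the ordinary generating function of peakless Motzkin paths from 0 to level k satisfies ∑_{n≥0} m(n,k)·zⁿ = z^k · M^{k+1} in ℚ⟦z⟧. -/

import Mathlib

/-- Steps of a Motzkin path: up, down, flat. -/
inductive Step : Type
  | U : Step
  | D : Step
  | F : Step
  deriving DecidableEq

instance instFintypeStep : Fintype Step :=
  ⟨⟨{Step.U, Step.D, Step.F}, by decide⟩, fun x => by cases x <;> decide⟩

/-- The value (vertical displacement) of a step. -/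
def Step.val : Step → ℤ
  | .U => 1
  | .D => -1
  | .F => 0

/-- The partial sum of the first `i` step values of the word `w`. -/
def psum {n : ℕ} (w : Fin n → Step) (i : ℕ) : ℤ :=
  ∑ j : Fin n, if (j : ℕ) < i then (w j).val else 0

/-- A word is peakless if no up-step is immediately followed by a down-step. -/
def Peakless {n : ℕ} (w : Fin n → Step) : Prop :=
  ∀ i : ℕ, ∀ h : i + 1 < n,
    ¬(w ⟨i, Nat.lt_of_succ_lt h⟩ = Step.U ∧ w ⟨i + 1, h⟩ = Step.D)

/-- `w` is a peakless Motzkin path from level `0` to level `k`: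
all partial sums are nonnegative, the total sum is `k`, and there is no peak. -/
def IsPeaklessMotzkinTo {n : ℕ} (w : Fin n → Step) (k : ℤ) : Prop :=
  (∀ i : ℕ, 0 ≤ psum w i) ∧ psum w n = k ∧ Peakless w

/-- The height of a path: the maximum of its partial sums (0 for the empty path). -/
def height {n : ℕ} (w : Fin n → Step) : ℤ :=
  (Finset.range (n + 1)).sup' Finset.nonempty_range_add_one (psum w)

/-- `mTo n k`: the number of peakless Motzkin paths of length `n` from level `0` to level `k`. -/
noncomputable def mTo (n : ℕ) (k : ℤ) : ℕ :=
  Nat.card {w : Fin n → Step // IsPeaklessMotzkinTo w k}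

/-- `m n`: the number of peakless Motzkin paths of length `n`. -/
noncomputable def m (n : ℕ) : ℕ := mTo n 0

/-- `A n ℓ`: the number of peakless Motzkin paths of length `n` of height at most `ℓ`. -/
noncomputable def A (n ℓ : ℕ) : ℕ :=
  Nat.card {w : Fin n → Step // IsPeaklessMotzkinTo w 0 ∧ height w ≤ (ℓ : ℤ)}

/-!
A peakless path to level `k + 1` splits uniquely at the last moment it leaves level `k`: that
step is an up-step, the part before it is a peakless path to level `k`, and the part after it is
a peakless Motzkin path shifted up by `k + 1`. Gluing back creates no peak because a path that
stays nonnegative cannot start with a down-step. Hence `M_k = ∑ m(n,k) zⁿ` satisfies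
`M_{k+1} = z M_k M`, and induction on `k` gives `M_k = z^k M^{k+1}`.
-/

lemma Step.val_le_one (s : Step) : s.val ≤ 1 := by
  cases s <;> decide

namespace PeaklessMotzkin

section Lists

open List

def level (l : List Step) : ℤ := (l.map Step.val).sum

@[simp] lemma level_nil : level [] = 0 := rfl

@[simp] lemma level_cons (s : Step) (l : List Step) : level (s :: l) = s.val + level l := by
  simp [level]

@[simp] lemma level_append (l₁ l₂ : List Step) :
    level (l₁ ++ l₂) = level l₁ + level l₂ := by
  simp [level]

def NoPeak (a b : Step) : Prop := ¬(a = .U ∧ b = .D)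

def IsPath (l : List Step) (k : ℤ) : Prop :=
  (∀ i, 0 ≤ level (l.take i)) ∧ level l = k ∧ l.IsChain NoPeak

lemma psum_eq_level_take {n : ℕ} (w : Fin n → Step) (i : ℕ) :
    psum w i = level ((ofFn w).take i) := by
  induction n generalizing i with
  | zero => simp [psum]
  | succ n ih =>
    cases i with
    | zero => simp [psum]
    | succ i =>
      rw [ofFn_succ, take_succ_cons, level_cons, ← ih, psum, psum,
        Fin.sum_univ_succ]
      simp

lemma isPeaklessMotzkinTo_iff_isPath {n : ℕ} (w : Fin n → Step) (k : ℤ) :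
    IsPeaklessMotzkinTo w k ↔ IsPath (ofFn w) k := by
  have hfull : (ofFn w).take n = ofFn w := take_of_length_le (by simp)
  simp only [IsPeaklessMotzkinTo, IsPath, Peakless, isChain_ofFn, NoPeak,
    psum_eq_level_take, hfull]

variable {u v l : List Step} {k : ℤ}

lemma IsPath.level_nonneg (h : IsPath l k) : 0 ≤ k := by
  simpa [h.2.1] using h.1 l.length

lemma IsPath.lt_level (hl : IsPath l (k + 1)) : k < level l := by
  rw [hl.2.1]
  exact lt_add_one k

lemma take_append_U_cons (u v : List Step) (i : ℕ) :
    (u ++ .U :: v).take (u.length + 1 + i) = u ++ .U :: v.take i := by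
  rw [add_assoc, take_length_add_append, Nat.add_comm, take_succ_cons]

lemma level_take_add_one (l : List Step) {i : ℕ} (hi : i < l.length) :
    level (l.take (i + 1)) = level (l.take i) + l[i].val := by
  rw [take_add_one, getElem?_eq_getElem hi, Option.toList_some, level_append, level_cons,
    level_nil, add_zero]

lemma IsPath.append_U_cons (hu : IsPath u k) (hv : IsPath v 0) :
    IsPath (u ++ .U :: v) (k + 1) := by
  refine ⟨fun i => ?_, by simp [hu.2.1, hv.2.1, Step.val], ?_⟩
  · rcases le_or_gt i u.length with hi | hi
    · rw [take_append_of_le_length hi]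
      exact hu.1 i
    · obtain ⟨j, rfl⟩ : ∃ j, i = u.length + 1 + j := ⟨i - (u.length + 1), by omega⟩
      have := hv.1 j
      simp only [take_append_U_cons, level_append, level_cons, hu.2.1, Step.val]
      linarith [hu.level_nonneg]
  · refine isChain_append.2 ⟨hu.2.2, isChain_cons.2 ⟨?_, hv.2.2⟩, ?_⟩
    · rintro s hs ⟨-, rfl⟩
      -- `v` cannot start with a down-step since its first partial sum is nonnegative
      obtain ⟨t, rfl⟩ : ∃ t, v = .D :: t := ⟨v.tail, (cons_head?_tail hs).symm⟩
      simpa [Step.val] using hv.1 1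
    · rintro _ _ _ hs ⟨-, rfl⟩
      simp at hs

noncomputable def splitIndex (l : List Step) (k : ℤ) : ℕ :=
  Nat.findGreatest (fun i => level (l.take i) ≤ k) l.length

lemma level_take_splitIndex_le (hk : 0 ≤ k) : level (l.take (splitIndex l k)) ≤ k :=
  Nat.findGreatest_spec (P := fun i => level (l.take i) ≤ k) (Nat.zero_le _) (by simpa using hk)

lemma lt_level_take_of_splitIndex_lt {i : ℕ} (hi : splitIndex l k < i) (hil : i ≤ l.length) :
    k < level (l.take i) :=
  not_le.1 (Nat.findGreatest_is_greatest hi hil)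

lemma splitIndex_lt_length (hk : 0 ≤ k) (hl : k < level l) : splitIndex l k < l.length := by
  refine (Nat.findGreatest_le _).lt_of_ne fun h => ?_
  have := level_take_splitIndex_le (l := l) hk
  rw [splitIndex, h, take_length] at this
  exact this.not_gt hl

section Split

variable (hk : 0 ≤ k) (hl : k < level l)
include hk hl

-- steps rise by at most one, so the crossing from `≤ k` to `> k` is an up-step from level `k`
lemma level_take_splitIndex_eq_and_getElem_eq :
    level (l.take (splitIndex l k)) = k ∧
      l[splitIndex l k]'(splitIndex_lt_length hk hl) = .U := by
  have hlt := splitIndex_lt_length hk hl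
  have hle := level_take_splitIndex_le (l := l) hk
  have hgt := lt_level_take_of_splitIndex_lt (Nat.lt_succ_self _) hlt
  rw [level_take_add_one l hlt] at hgt
  have := (l[splitIndex l k]).val_le_one
  refine ⟨by omega, ?_⟩
  cases h : l[splitIndex l k] <;> simp only [h, Step.val] at hgt <;> first | rfl | omega

lemma take_splitIndex_append_U_cons_drop :
    l.take (splitIndex l k) ++ .U :: l.drop (splitIndex l k + 1) = l := by
  have hlt := splitIndex_lt_length hk hl
  rw [← (level_take_splitIndex_eq_and_getElem_eq hk hl).2, ← drop_eq_getElem_cons hlt,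
    take_append_drop]

end Split

lemma IsPath.take_splitIndex (hk : 0 ≤ k) (hl : IsPath l (k + 1)) :
    IsPath (l.take (splitIndex l k)) k := by
  have hlevel := hl.lt_level
  refine ⟨fun i => ?_, (level_take_splitIndex_eq_and_getElem_eq hk hlevel).1, ?_⟩
  · rw [take_take]
    exact hl.1 _
  · have := hl.2.2
    rw [← take_splitIndex_append_U_cons_drop hk hlevel, isChain_append] at this
    exact this.1

lemma IsPath.drop_splitIndex (hk : 0 ≤ k) (hl : IsPath l (k + 1)) :
    IsPath (l.drop (splitIndex l k + 1)) 0 := by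
  have hlevel := hl.lt_level
  have hj := splitIndex_lt_length hk hlevel
  have hu := (level_take_splitIndex_eq_and_getElem_eq hk hlevel).1
  have hlater := fun i =>
    lt_level_take_of_splitIndex_lt (l := l) (k := k) (i := splitIndex l k + 1 + i)
  have hdecomp := take_splitIndex_append_U_cons_drop hk hlevel
  rw [← length_take_of_le hj.le] at hlater
  generalize l.take (splitIndex l k) = u at hu hlater hdecomp
  generalize l.drop (splitIndex l k + 1) = v at hlater hdecomp ⊢
  subst hdecomp
  refine ⟨fun i => ?_, ?_, (isChain_cons.1 (isChain_append.1 hl.2.2).2.1).2⟩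
  · -- every prefix of `l` longer than `u` stays strictly above level `k`
    rw [take_eq_take_min]
    have := hlater (min i v.length) (by omega) (by simp; omega)
    simp only [take_append_U_cons, level_append, level_cons, hu, Step.val] at this
    omega
  · have := hl.2.1
    simp only [level_append, level_cons, hu, Step.val] at this
    omega

lemma splitIndex_append_U_cons (hu : IsPath u k) (hv : IsPath v 0) :
    splitIndex (u ++ .U :: v) k = u.length := by
  refine Nat.findGreatest_eq_iff.2 ⟨by simp, fun _ => ?_, fun i hi hil => ?_⟩
  · rw [take_left' rfl, hu.2.1]
  · obtain ⟨j, rfl⟩ : ∃ j, i = u.length + 1 + j := ⟨i - (u.length + 1), by omega⟩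
    have := hv.1 j
    simp only [take_append_U_cons, level_append, level_cons, hu.2.1, Step.val]
    omega

end Lists

section Counting

open Finset PowerSeries

open Classical in
noncomputable def paths (n : ℕ) (k : ℤ) : Finset (List Step) :=
  ({w | IsPeaklessMotzkinTo w k} : Finset (Fin n → Step)).map ⟨List.ofFn, List.ofFn_injective⟩

lemma card_paths (n : ℕ) (k : ℤ) : #(paths n k) = mTo n k := by
  classical
  rw [paths, card_map, mTo, Nat.card_eq_fintype_card, Fintype.card_subtype]

lemma mem_paths {n : ℕ} {k : ℤ} {l : List Step} :
    l ∈ paths n k ↔ l.length = n ∧ IsPath l k := by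
  simp only [paths, mem_map, mem_filter, mem_univ, true_and, Function.Embedding.coeFn_mk,
    isPeaklessMotzkinTo_iff_isPath]
  constructor
  · rintro ⟨w, hw, rfl⟩
    exact ⟨List.length_ofFn, hw⟩
  · rintro ⟨rfl, hl⟩
    exact ⟨l.get, by rwa [List.ofFn_get], List.ofFn_get l⟩

lemma mTo_add_one_add_one (n : ℕ) {k : ℤ} (hk : 0 ≤ k) :
    mTo (n + 1) (k + 1) = ∑ p ∈ antidiagonal n, mTo p.1 k * m p.2 := by
  simp only [← card_paths, m, ← card_product, ← card_sigma]
  symm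
  refine card_nbij' (fun x => x.2.1 ++ .U :: x.2.2)
    (fun l => ⟨(splitIndex l k, n - splitIndex l k),
      (l.take (splitIndex l k), l.drop (splitIndex l k + 1))⟩)
    ?_ ?_ ?_ ?_
  · rintro ⟨⟨i, j⟩, u, v⟩ hx
    simp only [mem_coe, mem_sigma, HasAntidiagonal.mem_antidiagonal, mem_product,
      mem_paths] at hx ⊢
    obtain ⟨hij, ⟨rfl, hu⟩, rfl, hv⟩ := hx
    exact ⟨by simp [← hij]; omega, hu.append_U_cons hv⟩
  · intro l hl
    simp only [mem_coe, mem_sigma, HasAntidiagonal.mem_antidiagonal, mem_product,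
      mem_paths] at hl ⊢
    obtain ⟨hlen, hl⟩ := hl
    have := splitIndex_lt_length hk hl.lt_level
    exact ⟨by omega, ⟨by simp; omega, hl.take_splitIndex hk⟩, by simp; omega,
      hl.drop_splitIndex hk⟩
  · rintro ⟨⟨i, j⟩, u, v⟩ hx
    simp only [mem_coe, mem_sigma, HasAntidiagonal.mem_antidiagonal, mem_product, mem_paths] at hx
    obtain ⟨hij, ⟨rfl, hu⟩, rfl, hv⟩ := hx
    simp [splitIndex_append_U_cons hu hv, ← hij]
  · intro l hl
    exact take_splitIndex_append_U_cons_drop hk (mem_paths.1 hl).2.lt_level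

lemma mTo_zero_of_ne_zero {k : ℤ} (hk : k ≠ 0) : mTo 0 k = 0 := by
  rw [← card_paths, card_eq_zero, eq_empty_iff_forall_notMem]
  rintro l hl
  obtain ⟨hlen, hl⟩ := mem_paths.1 hl
  rw [List.length_eq_zero_iff.1 hlen] at hl
  exact hk hl.2.1.symm

lemma mk_mTo_add_one (R : Type*) [CommSemiring R] {k : ℤ} (hk : 0 ≤ k) :
    PowerSeries.mk (fun n => (mTo n (k + 1) : R)) =
      X * PowerSeries.mk (fun n => (mTo n k : R)) * PowerSeries.mk (fun n => (m n : R)) := by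
  ext (_ | n)
  · simp [mTo_zero_of_ne_zero (by omega : k + 1 ≠ 0)]
  · rw [mul_assoc, coeff_succ_X_mul, coeff_mul, coeff_mk, mTo_add_one_add_one n hk]
    simp

end Counting

end PeaklessMotzkin

open PeaklessMotzkin in
/-- For every `k ≥ 0`, the generating function of peakless Motzkin paths ending at level
`k` satisfies `∑ m(n,k) zⁿ = z^k · M^{k+1}` in `ℚ⟦z⟧`, where `M = ∑ m(n) zⁿ`. -/
theorem peakless_to_level_gf_eq (k : ℕ) :
    (PowerSeries.mk fun n => (mTo n (k : ℤ) : ℚ))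
      = PowerSeries.X ^ k * (PowerSeries.mk fun n => (m n : ℚ)) ^ (k + 1) := by
  induction k with
  | zero => simp [m]
  | succ k ih =>
    rw [Nat.cast_succ, mk_mTo_add_one ℚ k.cast_nonneg, ih]
    ring
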